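/- arXiv:2209.06386 — 4 statements merged into one kernel-verified Lean document; each statement's English description precedes it below -/
import Mathlib

section
/- If A, B, σ > 0 and r > 1 + AB and all roots of q(λ) = λ³ + (σ+1)λ² + σ(1 − r + AB)λ + ABσ are real, then q has exactly one negative real root and two positive real roots (counted with multiplicity). -/
open Polynomial

theorem stmt5 (σ r A B : ℝ) (hA : 0 < A) (hB : 0 < B) (hσ : 0 < σ)
    (hr : 1 + A * B < r)
    (q : Polynomial ℝ)
    (hq : q = X ^ 3 + C (σ + 1) * X ^ 2 + C (σ * (1 - r + A * B)) * X + C (A * B * σ))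
    (hreal : q.roots.card = 3) :
    (q.roots.filter (fun l => l < 0)).card = 1 ∧
    (q.roots.filter (fun l => 0 < l)).card = 2 := by
  have hdeg : q.natDegree = 3 := by subst hq; compute_degree!
  have hmon : q.Monic := by subst hq; monicity!
  obtain ⟨x, y, z, hxyz⟩ := Multiset.card_eq_three.mp hreal
  have hsplit : (q.roots.map fun a => X - C a).prod = q :=
    prod_multiset_X_sub_C_of_monic_of_roots_card_eq hmon (by rw [hreal, hdeg])
  rw [hxyz] at hsplit
  simp only [Multiset.insert_eq_cons, Multiset.map_cons, Multiset.map_singleton,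
    Multiset.prod_cons, Multiset.prod_singleton] at hsplit
  have hexp : q = X ^ 3 - C (x + y + z) * X ^ 2 + C (x * y + y * z + z * x) * X
      - C (x * y * z) := by
    rw [← hsplit]
    simp only [C_add, C_mul]
    ring
  have h0 : q.coeff 0 = A * B * σ := by
    rw [hq]
    simp only [coeff_add, coeff_C_mul, coeff_X_pow, coeff_X, coeff_C]
    norm_num
  have h0' : q.coeff 0 = -(x * y * z) := by
    rw [hexp]
    simp only [coeff_add, coeff_sub, coeff_C_mul, coeff_X_pow, coeff_X, coeff_C]
    norm_num
  have h1 : q.coeff 1 = σ * (1 - r + A * B) := by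
    rw [hq]
    simp only [coeff_add, coeff_C_mul, coeff_X_pow, coeff_X, coeff_C]
    norm_num
  have h1' : q.coeff 1 = x * y + y * z + z * x := by
    rw [hexp]
    simp only [coeff_add, coeff_sub, coeff_C_mul, coeff_X_pow, coeff_X, coeff_C]
    norm_num
  have hprod : x * y * z < 0 := by
    have := h0.symm.trans h0'
    nlinarith [mul_pos (mul_pos hA hB) hσ]
  have hsum2 : x * y + y * z + z * x < 0 := by
    have h2 : 1 - r + A * B < 0 := by linarith
    have := h1.symm.trans h1'
    nlinarith [mul_neg_of_pos_of_neg hσ h2]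
  have hx0 : x ≠ 0 := by rintro rfl; simp at hprod
  have hy0 : y ≠ 0 := by rintro rfl; simp at hprod
  have hz0 : z ≠ 0 := by rintro rfl; simp at hprod
  have key : (x < 0 ∧ 0 < y ∧ 0 < z) ∨ (0 < x ∧ y < 0 ∧ 0 < z) ∨
      (0 < x ∧ 0 < y ∧ z < 0) := by
    rcases hx0.lt_or_gt with hx | hx <;> rcases hy0.lt_or_gt with hy | hy <;>
      rcases hz0.lt_or_gt with hz | hz
    · exfalso
      nlinarith [mul_pos (neg_pos.2 hx) (neg_pos.2 hy),
        mul_pos (neg_pos.2 hy) (neg_pos.2 hz), mul_pos (neg_pos.2 hx) (neg_pos.2 hz)]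
    · exfalso; nlinarith [mul_pos (mul_pos (neg_pos.2 hx) (neg_pos.2 hy)) hz]
    · exfalso; nlinarith [mul_pos (mul_pos (neg_pos.2 hx) hy) (neg_pos.2 hz)]
    · exact Or.inl ⟨hx, hy, hz⟩
    · exfalso; nlinarith [mul_pos (mul_pos hx (neg_pos.2 hy)) (neg_pos.2 hz)]
    · exact Or.inr (Or.inl ⟨hx, hy, hz⟩)
    · exact Or.inr (Or.inr ⟨hx, hy, hz⟩)
    · exfalso; nlinarith [mul_pos (mul_pos hx hy) hz]
  constructor <;> rw [hxyz] <;>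
    rcases key with ⟨h1, h2, h3⟩ | ⟨h1, h2, h3⟩ | ⟨h1, h2, h3⟩ <;>
    simp [Multiset.insert_eq_cons, Multiset.filter_cons, Multiset.filter_singleton, h1, h2, h3,
      h1.not_gt, h2.not_gt, h3.not_gt]
end

section
/- If A, B, σ > 0 and q(λ) = λ³ + (σ+1)λ² + σ(1 − r + AB)λ + ABσ has a purely imaginary root iω with ω ∈ ℝ, ω ≠ 0, then necessarily r = 1 + AB·σ/(σ+1) and ω² = AB·σ/(σ+1). -/
open Complex

theorem stmt7 (σ r A B ω : ℝ) (hA : 0 < A) (hB : 0 < B) (hσ : 0 < σ)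
    (hω : ω ≠ 0)
    (hroot : (I * ω) ^ 3 + (σ + 1 : ℂ) * (I * ω) ^ 2
        + (σ * (1 - r + A * B) : ℝ) * (I * ω) + (A * B * σ : ℝ) = 0) :
    r = 1 + A * B * (σ / (σ + 1)) ∧ ω ^ 2 = A * B * (σ / (σ + 1)) := by
  have hre := congrArg Complex.re hroot
  have him := congrArg Complex.im hroot
  simp [Complex.add_re, Complex.add_im, Complex.mul_re, Complex.mul_im, pow_succ] at hre him
  have hσ1 : σ + 1 ≠ 0 := by linarith
  have h2 : ω ^ 2 = A * B * (σ / (σ + 1)) := by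
    field_simp
    nlinarith [hre, sq_nonneg ω]
  refine ⟨?_, h2⟩
  have h3 : ω ^ 2 = σ * (1 - r + A * B) := by
    have hz : ω * (σ * (1 - r + A * B) - ω ^ 2) = 0 := by ring_nf; ring_nf at him; linarith
    rcases mul_eq_zero.mp hz with h | h
    · exact absurd h hω
    · linarith
  have : σ * (1 - r + A * B) = A * B * (σ / (σ + 1)) := by rw [← h3, h2]
  field_simp at this
  have hσ' : σ ≠ 0 := ne_of_gt hσ
  nlinarith [this]
end

section
/- If A, B, σ > 0 and r < 1 + AB·σ/(σ+1), then every complex root λ of q(λ) = λ³ + (σ+1)λ² + σ(1 − r + AB)λ + ABσ satisfies Re(λ) < 0 (the equilibrium at a trough of the potential is linearly stable). -/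
theorem stmt10 (σ r A B : ℝ) (hA : 0 < A) (hB : 0 < B) (hσ : 0 < σ)
    (hr : r < 1 + A * B * (σ / (σ + 1))) :
    ∀ z : ℂ, z ^ 3 + (σ + 1 : ℂ) * z ^ 2 + (σ * (1 - r + A * B) : ℝ) * z
        + (A * B * σ : ℝ) = 0 → z.re < 0 := by
  intro z hz
  by_contra hx
  push_neg at hx
  have hσ1 : (0:ℝ) < σ + 1 := by linarith
  have hr2 : r * (σ + 1) < (σ + 1) + A * B * σ := by
    have h := mul_lt_mul_of_pos_right hr hσ1
    field_simp at h
    linarith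
  have hAB : 0 < A * B := mul_pos hA hB
  have ha2 : 0 < σ * (1 - r + A * B) := by
    have : 0 < 1 - r + A * B := by nlinarith
    positivity
  have ha13 : A * B * σ < (σ + 1) * (σ * (1 - r + A * B)) := by nlinarith
  set x := z.re with hxdef
  set y := z.im with hydef
  have hre := congrArg Complex.re hz
  have him := congrArg Complex.im hz
  simp [Complex.add_re, Complex.add_im, Complex.mul_re, Complex.mul_im, pow_succ,
    Complex.ofReal_re, Complex.ofReal_im] at hre him
  rcases eq_or_ne z.im 0 with hy | hy
  · rw [hy] at hre
    nlinarith [pow_nonneg hx 3, sq_nonneg z.re, mul_nonneg (le_of_lt ha2) hx,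
      mul_pos hAB hσ, mul_nonneg (mul_nonneg hx hx) hx]
  · have hy2 : z.im ^ 2 = 3 * z.re ^ 2 + 2 * (σ + 1) * z.re + σ * (1 - r + A * B) := by
      refine mul_left_cancel₀ hy ?_
      linear_combination -him
    have hE : A * B * σ - (σ + 1) * (σ * (1 - r + A * B)) =
        8 * z.re ^ 3 + 8 * (σ + 1) * z.re ^ 2 + 2 * (σ * (1 - r + A * B)) * z.re
          + 2 * (σ + 1) ^ 2 * z.re := by
      linear_combination hre + (3 * z.re + (σ + 1)) * hy2
    nlinarith [pow_nonneg hx 3, sq_nonneg z.re, mul_nonneg (le_of_lt ha2) hx,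
      mul_nonneg (sq_nonneg (σ+1)) hx]
end

section
/- If A, B, σ > 0 and r > 1 + AB·σ/(σ+1), then q(λ) = λ³ + (σ+1)λ² + σ(1 − r + AB)λ + ABσ has at least one root with strictly positive real part (the equilibrium at a trough is linearly unstable). -/
lemma stmt11_aux (a b c α₁ α₂ α₃ : ℝ) (h1 : α₁ = b - a) (h2 : α₂ = c - a * b)
    (h3 : α₃ = -(a * c)) (z : ℂ) (hz : z ^ 2 + (b : ℂ) * z + (c : ℂ) = 0) :
    z ^ 3 + (α₁ : ℂ) * z ^ 2 + (α₂ : ℂ) * z + (α₃ : ℂ) = 0 := by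
  subst h1 h2 h3
  push_cast
  linear_combination (z - (a : ℂ)) * hz

theorem stmt11 (σ r A B : ℝ) (hA : 0 < A) (hB : 0 < B) (hσ : 0 < σ)
    (hr : 1 + A * B * (σ / (σ + 1)) < r) :
    ∃ z : ℂ, z ^ 3 + (σ + 1 : ℂ) * z ^ 2 + (σ * (1 - r + A * B) : ℝ) * z
        + (A * B * σ : ℝ) = 0 ∧ 0 < z.re := by
  have hσ1 : 0 < σ + 1 := by linarith
  set α₁ : ℝ := σ + 1 with hα₁
  set α₂ : ℝ := σ * (1 - r + A * B) with hα₂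
  set α₃ : ℝ := A * B * σ with hα₃
  have hα₃pos : 0 < α₃ := by rw [hα₃]; positivity
  have hRH : α₁ * α₂ - α₃ < 0 := by
    have h1 : A * B * (σ / (σ + 1)) < r - 1 := by linarith
    have h2 : A * B * σ < (r - 1) * (σ + 1) := by
      rw [show A * B * (σ / (σ + 1)) = A * B * σ / (σ + 1) by ring] at h1
      exact (div_lt_iff₀ hσ1).mp h1
    rw [hα₁, hα₂, hα₃]
    nlinarith [mul_pos hσ hσ1]
  -- real root of the cubic
  set f : ℝ → ℝ := fun x => x ^ 3 + α₁ * x ^ 2 + α₂ * x + α₃ with hf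
  have hfc : Continuous f := by fun_prop
  set M : ℝ := 1 + |α₁| + |α₂| + |α₃| with hM
  have hM1 : 1 ≤ M := by
    have := abs_nonneg α₁; have := abs_nonneg α₂; have := abs_nonneg α₃
    rw [hM]; linarith
  have hfM : f (-M) < 0 := by
    simp only [hf]
    have h1 : α₁ ≤ |α₁| := le_abs_self _
    have h2 : -α₂ ≤ |α₂| := neg_le_abs _
    have h3 : α₃ ≤ |α₃| := le_abs_self _
    have hsum : |α₁| + |α₂| + |α₃| = M - 1 := by rw [hM]; ring
    nlinarith [abs_nonneg α₁, abs_nonneg α₂, abs_nonneg α₃, sq_nonneg M, mul_pos (lt_of_lt_of_le one_pos hM1) (lt_of_lt_of_le one_pos hM1)]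
  have hf0 : 0 < f 0 := by simp only [hf]; norm_num; exact hα₃pos
  obtain ⟨a, haI, hfa⟩ : ∃ a ∈ Set.Icc (-M) 0, f a = 0 := by
    have hsub := intermediate_value_Icc (by linarith : (-M : ℝ) ≤ 0) hfc.continuousOn
    have h0mem : (0 : ℝ) ∈ Set.Icc (f (-M)) (f 0) := ⟨hfM.le, hf0.le⟩
    obtain ⟨a, ha, hfa⟩ := hsub h0mem
    exact ⟨a, ha, hfa⟩
  have ha0 : a < 0 := by
    rcases lt_or_eq_of_le haI.2 with h | h
    · exact h
    · exfalso; rw [h] at hfa; rw [hfa] at hf0; exact lt_irrefl 0 hf0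
  simp only [hf] at hfa
  set b : ℝ := α₁ + a with hbdef
  set c : ℝ := α₂ + a * b with hcdef
  have hac : a * c = -α₃ := by
    rw [hcdef, hbdef]; linear_combination hfa
  have hcpos : 0 < c := by
    by_contra h
    push_neg at h
    nlinarith [mul_nonneg (neg_nonneg.mpr h) (neg_nonneg.mpr ha0.le)]
  have h1 : α₁ = b - a := by rw [hbdef]; ring
  have h2 : α₂ = c - a * b := by rw [hcdef]; ring
  have h3 : α₃ = -(a * c) := by linarith
  have hident : α₁ * α₂ - α₃ = b * (a ^ 2 - a * b + c) := by
    rw [h1, h2, h3]; ring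
  have hb : b < 0 := by
    by_contra h
    push_neg at h
    nlinarith [mul_nonneg h hcpos.le, mul_nonneg (mul_nonneg h h) (neg_nonneg.mpr ha0.le),
      mul_nonneg h (sq_nonneg a)]
  -- goal reshaping
  have hcoef : ((σ : ℂ) + 1) = ((α₁ : ℝ) : ℂ) := by rw [hα₁]; push_cast; ring
  rcases le_or_gt (4 * c) (b ^ 2) with hD | hD
  · -- real positive root of the quadratic
    set s : ℝ := Real.sqrt (b ^ 2 - 4 * c) with hs
    have hs2 : s ^ 2 = b ^ 2 - 4 * c := Real.sq_sqrt (by linarith)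
    have hsnn : 0 ≤ s := Real.sqrt_nonneg _
    set x : ℝ := (-b + s) / 2 with hx
    have hxpos : 0 < x := by rw [hx]; linarith
    have hquad : ((x : ℂ)) ^ 2 + (b : ℂ) * x + (c : ℂ) = 0 := by
      have hq : x ^ 2 + b * x + c = 0 := by rw [hx]; linear_combination hs2 / 4
      exact_mod_cast congrArg (fun t : ℝ => (t : ℂ)) hq
    refine ⟨(x : ℂ), ?_, by simpa using hxpos⟩
    rw [hcoef]
    exact stmt11_aux a b c α₁ α₂ α₃ h1 h2 h3 _ hquad
  · -- complex root with positive real part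
    set t : ℝ := Real.sqrt (4 * c - b ^ 2) with ht
    have ht2 : t ^ 2 = 4 * c - b ^ 2 := Real.sq_sqrt (by linarith)
    set z : ℂ := ((-b / 2 : ℝ) : ℂ) + ((t / 2 : ℝ) : ℂ) * Complex.I with hz
    have htC : ((t : ℂ)) ^ 2 = 4 * (c : ℂ) - (b : ℂ) ^ 2 := by exact_mod_cast ht2
    have hquad : z ^ 2 + (b : ℂ) * z + (c : ℂ) = 0 := by
      rw [hz]
      push_cast
      linear_combination ((t : ℂ) / 2) ^ 2 * Complex.I_sq + (-(1 : ℂ) / 4) * htC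
    have hre : 0 < z.re := by
      rw [hz]; simp; linarith
    refine ⟨z, ?_, hre⟩
    rw [hcoef]
    exact stmt11_aux a b c α₁ α₂ α₃ h1 h2 h3 _ hquad
end
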